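/- Let t be a positive integer, k > 0, and let q_t(l) denote the probability that a simple symmetric random walk on ℤ is at l after t steps. Define the truncation q̃_t(x) = ∑_{|l| ≤ k} q_t(l) T_{|l|}(x). Then max over x in [−1,1] of |x^t − q̃_t(x)| ≤ ∑_{|l| > k} q_t(l) ≤ 2 exp(−k²/(2t)). -/

import Mathlib

/-! Write `x = cos θ`. Expanding `x ^ t = ((e^{iθ} + e^{-iθ}) / 2) ^ t` binomially gives
`x ^ t = ∑ l, q_t(l) cos (l θ) = ∑ l, q_t(l) T_{|l|}(x)`, so since `|T_n| ≤ 1` on `[-1, 1]`,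
truncating to `|l| ≤ k` costs at most the tail mass. The same expansion at a real exponent gives
the moment generating function `∑ l, q_t(l) e^{s l} = cosh s ^ t ≤ e^{t s² / 2}`, and the Chernoff
bound `1_{k < |l|} ≤ e^{s (|l| - k)}` with `s = k / t` bounds the tail by `2 e^{-k² / (2 t)}`. -/

open Finset Polynomial

/-- `rwProb t l` is the probability that a simple symmetric random walk on `ℤ`
starting at `0` is at position `l` after `t` steps. -/
noncomputable def rwProb (t : ℕ) (l : ℤ) : ℝ :=
  if (t + l.natAbs) % 2 = 0 ∧ l.natAbs ≤ t then
    (t.choose ((t + l).toNat / 2) : ℝ) / 2 ^ t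
  else 0

lemma rwProb_nonneg (t : ℕ) (l : ℤ) : 0 ≤ rwProb t l := by
  unfold rwProb; split <;> positivity

lemma rwProb_eq_zero_of_lt_natAbs {t : ℕ} {l : ℤ} (h : t < l.natAbs) : rwProb t l = 0 := by
  rw [rwProb, if_neg]; omega

lemma rwProb_two_mul_sub {t j : ℕ} (hj : j ≤ t) : rwProb t (2 * j - t) = t.choose j / 2 ^ t := by
  rw [rwProb, if_pos (by omega)]
  congr
  omega

lemma rwProb_eq_zero_of_forall_ne {t : ℕ} {l : ℤ} (h : ∀ j ≤ t, 2 * (j : ℤ) - t ≠ l) :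
    rwProb t l = 0 := by
  rw [rwProb, if_neg]
  rintro ⟨hpar, hle⟩
  exact h ((t + l).toNat / 2) (by omega) (by omega)

lemma sum_rwProb_smul {M : Type*} [AddCommMonoid M] [Module ℝ M] (t : ℕ) (F : ℤ → M) :
    ∑ l ∈ Icc (-(t : ℤ)) t, rwProb t l • F l =
      ∑ j ∈ range (t + 1), (t.choose j / 2 ^ t : ℝ) • F (2 * j - t) := by
  have hinj : Set.InjOn (fun j : ℕ ↦ 2 * (j : ℤ) - t) (range (t + 1)) := fun a _ b _ h ↦ by
    simp only at h; omega
  rw [← sum_subset (s₁ := (range (t + 1)).image fun j : ℕ ↦ 2 * (j : ℤ) - t), sum_image hinj]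
  · refine sum_congr rfl fun j hj ↦ ?_
    rw [rwProb_two_mul_sub (Nat.lt_succ_iff.mp (mem_range.mp hj))]
  · intro l hl
    simp only [mem_image, mem_range, mem_Icc] at hl ⊢
    omega
  · intro l _ hl
    rw [rwProb_eq_zero_of_forall_ne fun j hj h ↦
      hl (mem_image.mpr ⟨j, by simpa [Nat.lt_succ_iff], h⟩), zero_smul]

theorem sum_rwProb_mul_cexp (t : ℕ) (z : ℂ) :
    ∑ l ∈ Icc (-(t : ℤ)) t, (rwProb t l : ℂ) * Complex.exp (l * z) = Complex.cosh z ^ t := by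
  simp_rw [← Complex.real_smul, sum_rwProb_smul, Complex.real_smul, Complex.cosh, div_pow, add_pow,
    sum_div]
  refine sum_congr rfl fun j hj ↦ ?_
  rw [← Complex.exp_nat_mul, ← Complex.exp_nat_mul, ← Complex.exp_add]
  push_cast [Nat.cast_sub (Nat.lt_succ_iff.mp (mem_range.mp hj))]
  ring_nf

theorem sum_rwProb_mul_exp (t : ℕ) (μ : ℝ) :
    ∑ l ∈ Icc (-(t : ℤ)) t, rwProb t l * Real.exp (l * μ) = Real.cosh μ ^ t := by
  exact_mod_cast sum_rwProb_mul_cexp t μ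

theorem sum_rwProb_mul_cos (t : ℕ) (θ : ℝ) :
    ∑ l ∈ Icc (-(t : ℤ)) t, rwProb t l * Real.cos (l * θ) = Real.cos θ ^ t := by
  have h := congrArg Complex.re (sum_rwProb_mul_cexp t (θ * Complex.I))
  rw [Complex.cosh_mul_I, ← Complex.ofReal_cos, ← Complex.ofReal_pow, Complex.ofReal_re,
    Complex.re_sum] at h
  simpa [← mul_assoc, ← Complex.ofReal_intCast, ← Complex.ofReal_mul, Complex.exp_ofReal_mul_I_re]
    using h

theorem pow_eq_sum_rwProb_mul_eval_T (t : ℕ) {x : ℝ} (hx : x ∈ Set.Icc (-1 : ℝ) 1) :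
    x ^ t = ∑ l ∈ Icc (-(t : ℤ)) t, rwProb t l * (Chebyshev.T ℝ |l|).eval x := by
  obtain ⟨θ, rfl⟩ : ∃ θ, Real.cos θ = x := ⟨Real.arccos x, Real.cos_arccos hx.1 hx.2⟩
  rw [← sum_rwProb_mul_cos t θ]
  refine sum_congr rfl fun l _ ↦ ?_
  rcases abs_choice l with h | h <;> simp [h, Chebyshev.T_real_cos]

theorem abs_sum_sub_sum_ite_le {ι : Type*} (s : Finset ι) (p : ι → Prop) [DecidablePred p]
    {q f : ι → ℝ} (hq : ∀ i ∈ s, 0 ≤ q i) (hf : ∀ i ∈ s, |f i| ≤ 1) :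
    |∑ i ∈ s, q i * f i - ∑ i ∈ s, (if p i then q i * f i else 0)| ≤
      ∑ i ∈ s, if ¬p i then q i else 0 := by
  rw [← sum_filter, ← sum_filter, ← sum_filter_add_sum_filter_not s p, add_sub_cancel_left]
  refine (abs_sum_le_sum_abs _ _).trans (sum_le_sum fun i hi ↦ ?_)
  have hi := (mem_filter.mp hi).1
  rw [abs_mul, abs_of_nonneg (hq i hi)]
  exact mul_le_of_le_one_right (hq i hi) (hf i hi)

theorem tsum_ite_rwProb (t : ℕ) (p : ℤ → Prop) [DecidablePred p] :
    ∑' l : ℤ, (if p l then rwProb t l else 0) =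
      ∑ l ∈ Icc (-(t : ℤ)) t, if p l then rwProb t l else 0 :=
  tsum_eq_sum fun l hl ↦ by
    rw [rwProb_eq_zero_of_lt_natAbs (by simp only [mem_Icc] at hl; omega), ite_self]

theorem ite_lt_abs_le_exp_mul {s : ℝ} (hs : 0 ≤ s) (k y : ℝ) :
    (if k < |y| then 1 else 0 : ℝ) ≤
      Real.exp (-(s * k)) * (Real.exp (y * s) + Real.exp (y * -s)) := by
  have hexp : Real.exp (s * |y|) ≤ Real.exp (y * s) + Real.exp (y * -s) := by
    rcases abs_choice y with h | h <;> rw [h]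
    · exact le_add_of_le_of_nonneg (le_of_eq (by ring_nf)) (Real.exp_nonneg _)
    · exact le_add_of_nonneg_of_le (Real.exp_nonneg _) (le_of_eq (by ring_nf))
  calc (if k < |y| then 1 else 0 : ℝ) ≤ Real.exp (-(s * k)) * Real.exp (s * |y|) := by
        rw [← Real.exp_add]
        split_ifs with h
        · exact Real.one_le_exp (by nlinarith)
        · exact (Real.exp_pos _).le
    _ ≤ _ := by gcongr

theorem sum_tail_rwProb_le (t : ℕ) (k : ℝ) {s : ℝ} (hs : 0 ≤ s) :
    ∑ l ∈ Icc (-(t : ℤ)) t, (if k < (|l| : ℝ) then rwProb t l else 0) ≤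
      2 * Real.exp (t * s ^ 2 / 2 - s * k) := by
  calc _ ≤ ∑ l ∈ Icc (-(t : ℤ)) t, rwProb t l *
        (Real.exp (-(s * k)) * (Real.exp (l * s) + Real.exp (l * -s))) := by
        refine sum_le_sum fun l _ ↦ ?_
        rw [← mul_one (rwProb t l), ← mul_ite_zero, mul_one]
        exact mul_le_mul_of_nonneg_left (ite_lt_abs_le_exp_mul hs k l) (rwProb_nonneg t l)
    _ = 2 * Real.exp (-(s * k)) * Real.cosh s ^ t := by
      simp_rw [mul_left_comm (rwProb t _), ← mul_sum, mul_add, sum_add_distrib,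
        sum_rwProb_mul_exp, Real.cosh_neg]
      ring
    _ ≤ 2 * Real.exp (-(s * k)) * Real.exp (s ^ 2 / 2) ^ t := by
      gcongr
      exact Real.cosh_le_exp_half_sq s
    _ = 2 * Real.exp (t * s ^ 2 / 2 - s * k) := by
      rw [← Real.exp_nat_mul, mul_assoc, ← Real.exp_add]
      ring_nf

theorem chebyshev_truncation_bound_general (t : ℕ) (k : ℝ) (hk : 0 < k)
    (x : ℝ) (hx : x ∈ Set.Icc (-1 : ℝ) 1) :
    |x ^ t - ∑ l ∈ Finset.Icc (-(t : ℤ)) t,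
        (if (|l| : ℝ) ≤ k then rwProb t l * (Polynomial.Chebyshev.T ℝ |l|).eval x else 0)| ≤
      ∑' l : ℤ, (if k < (|l| : ℝ) then rwProb t l else 0) ∧
    ∑' l : ℤ, (if k < (|l| : ℝ) then rwProb t l else 0) ≤ 2 * Real.exp (-k ^ 2 / (2 * t)) := by
  rw [tsum_ite_rwProb]
  constructor
  · rw [pow_eq_sum_rwProb_mul_eval_T t hx]
    simpa only [not_le] using abs_sum_sub_sum_ite_le _ (fun l : ℤ ↦ (|l| : ℝ) ≤ k)
      (fun l _ ↦ rwProb_nonneg t l) fun l _ ↦ Chebyshev.abs_eval_T_real_le_one _ (abs_le.mpr hx)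
  · convert sum_tail_rwProb_le t k (div_nonneg hk.le t.cast_nonneg) using 3
    rcases eq_or_ne (t : ℝ) 0 with ht | ht
    · simp [ht] -- at `t = 0` both exponents are `0`, as `k / 0 = 0`
    · field_simp
      ring

/-- Truncated Chebyshev expansion of `x^t`: for a positive integer `t` and `k > 0`,
letting `q̃_t(x) = ∑_{|l| ≤ k} q_t(l) T_{|l|}(x)`, one has for all `x ∈ [−1, 1]`
`|x^t − q̃_t(x)| ≤ ∑_{|l| > k} q_t(l) ≤ 2·exp(−k²/(2t))`. -/
theorem chebyshev_truncation_bound (t : ℕ) (ht : 0 < t) (k : ℝ) (hk : 0 < k)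
    (x : ℝ) (hx : x ∈ Set.Icc (-1 : ℝ) 1) :
    |x ^ t - ∑ l ∈ Finset.Icc (-(t : ℤ)) t,
        (if (|l| : ℝ) ≤ k then rwProb t l * (Polynomial.Chebyshev.T ℝ |l|).eval x else 0)| ≤
      ∑' l : ℤ, (if k < (|l| : ℝ) then rwProb t l else 0) ∧
    ∑' l : ℤ, (if k < (|l| : ℝ) then rwProb t l else 0) ≤ 2 * Real.exp (-k ^ 2 / (2 * t)) :=
  chebyshev_truncation_bound_general t k hk x hx
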